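/- arXiv:1608.01254 — 2 statements merged into one kernel-verified Lean document; each statement's English description precedes it below -/
import Mathlib

section
/- Let (α, E₁, …, E_n) be a countable nested n-equivalence structure, and set E₀ to be the total relation α × α and E_{n+1} to be equality. Then the structure is ultrahomogeneous if and only if for every i ∈ {0, …, n} there is a cardinal kᵢ such that for every a ∈ α, the set of E_{i+1}-classes contained in the E_i-class of a has cardinality kᵢ. -/
universe u

/-- The structure `(α, (E i)_i)` is ultrahomogeneous: every bijection between finite subsets of
`α` preserving each relation `E i` in both directions extends to a bijection of `α` preserving
each `E i` in both directions. -/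
def MultiUltrahomogeneous {α : Type*} {m : ℕ} (E : Fin m → α → α → Prop) : Prop :=
  ∀ s t : Set α, s.Finite → t.Finite →
    ∀ φ : ↥s ≃ ↥t,
      (∀ (i : Fin m) (x y : ↥s), E i x y ↔ E i ((φ x : ↥t) : α) ((φ y : ↥t) : α)) →
      ∃ ψ : α ≃ α, (∀ (i : Fin m) (x y : α), E i x y ↔ E i (ψ x) (ψ y)) ∧
        ∀ x : ↥s, ψ (x : α) = ((φ x : ↥t) : α)

namespace MultiUH

variable {α : Type u} {n : ℕ} {E : Fin (n + 2) → α → α → Prop}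

/-- A list of pairs is a partial isomorphism graph. -/
def GoodL (E : Fin (n + 2) → α → α → Prop) (L : List (α × α)) : Prop :=
  ∀ p ∈ L, ∀ q ∈ L, ∀ i, E i p.1 q.1 ↔ E i p.2 q.2

lemma class_eq_of_rel (hE : ∀ i, Equivalence (E i)) {j : Fin (n + 2)} {b c : α}
    (h : E j b c) : {z | E j b z} = {z | E j c z} := by
  ext z
  exact ⟨fun hz => (hE j).trans ((hE j).symm h) hz, fun hz => (hE j).trans h hz⟩

lemma rel_of_class_eq (hE : ∀ i, Equivalence (E i)) {j : Fin (n + 2)} {b c : α}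
    (h : {z | E j b z} = {z | E j c z}) : E j b c := by
  have : c ∈ {z | E j c z} := (hE j).refl c
  rw [← h] at this
  exact this

lemma GoodL.cons (hE : ∀ i, Equivalence (E i)) {L : List (α × α)} (hL : GoodL E L)
    {x y : α} (h : ∀ p ∈ L, ∀ i, E i x p.1 ↔ E i y p.2) : GoodL E ((x, y) :: L) := by
  intro p hp q hq i
  rcases List.mem_cons.mp hp with rfl | hp <;> rcases List.mem_cons.mp hq with rfl | hq
  · exact iff_of_true ((hE i).refl x) ((hE i).refl y)
  · exact h q hq i
  · constructor
    · exact fun hh => (hE i).symm ((h p hp i).mp ((hE i).symm hh))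
    · exact fun hh => (hE i).symm ((h p hp i).mpr ((hE i).symm hh))
  · exact hL p hp q hq i

section Extend

variable (hE : ∀ i, Equivalence (E i))
    (hzero : ∀ x y : α, E 0 x y)
    (hlast : ∀ x y : α, E (Fin.last (n + 1)) x y ↔ x = y)
    (hnested : ∀ i j : Fin (n + 2), i ≤ j → ∀ x y : α, E j x y → E i x y)
    (H : ∀ i : Fin (n + 1), ∃ k : Cardinal.{u}, ∀ a : α,
        Cardinal.mk ↥{C : Set α | (∃ b : α, C = {x : α | E i.succ b x}) ∧
          C ⊆ {x : α | E i.castSucc a x}} = k)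

include hE hzero hlast hnested H in
lemma extend_right (L : List (α × α)) (hL : GoodL E L) (x : α) :
    ∃ y, ∀ p ∈ L, ∀ i, E i x p.1 ↔ E i y p.2 := by
  classical
  by_cases hx : ∃ p ∈ L, p.1 = x
  · obtain ⟨p, hp, hpx⟩ := hx
    exact ⟨p.2, fun q hq i => by rw [← hpx]; exact hL p hp q hq i⟩
  by_cases hL0 : L = []
  · exact ⟨x, by simp [hL0]⟩
  push_neg at hx
  -- choose the maximal level i at which x is related to some element of the domain
  set P : Fin (n + 1) → Prop := fun i => ∃ p ∈ L, E i.castSucc x p.1 with hP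
  obtain ⟨p₁, hp₁⟩ := List.exists_mem_of_ne_nil L hL0
  have hP0 : P 0 := ⟨p₁, hp₁, by rw [Fin.castSucc_zero]; exact hzero _ _⟩
  set sP : Finset (Fin (n + 1)) := Finset.univ.filter P with hsP
  have hsne : sP.Nonempty := ⟨0, by simp [hsP, hP0]⟩
  set i := sP.max' hsne with hi
  have hPi : P i := (Finset.mem_filter.mp (sP.max'_mem hsne)).2
  have hmax : ∀ j, P j → j ≤ i := fun j hj => sP.le_max' j (by simp [hsP, hj])
  obtain ⟨p₀, hp₀L, hp₀⟩ := hPi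
  have notP : ∀ p ∈ L, ¬ E i.succ x p.1 := by
    intro p hp hcon
    by_cases hil : i = Fin.last n
    · have hx' : x = p.1 := by
        apply (hlast x p.1).mp
        rw [hil, Fin.succ_last] at hcon
        exact hcon
      exact hx p hp hx'.symm
    · have hlt : (i : ℕ) < n := by
        have := Fin.val_lt_last hil
        omega
      set i' : Fin (n + 1) := ⟨(i : ℕ) + 1, by omega⟩ with hi'
      have hcast : i'.castSucc = i.succ := by
        apply Fin.ext
        simp [hi']
      have hPi' : P i' := ⟨p, hp, by rw [hcast]; exact hcon⟩
      have := hmax i' hPi'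
      rw [Fin.le_def] at this
      simp [hi'] at this
  -- the counting argument
  obtain ⟨k, hk⟩ := H i
  set Cx : Set α := {z | E i.succ x z} with hCx
  set T : Set (Set α) := {C | ∃ p ∈ L, E i.castSucc x p.1 ∧ C = {z | E i.succ p.1 z}} with hT
  set T' : Set (Set α) := {C | ∃ p ∈ L, E i.castSucc x p.1 ∧ C = {z | E i.succ p.2 z}} with hT'
  set Sx : Set (Set α) := {C : Set α | (∃ b : α, C = {z : α | E i.succ b z}) ∧
      C ⊆ {z : α | E i.castSucc x z}} with hSx
  set Sy : Set (Set α) := {C : Set α | (∃ b : α, C = {z : α | E i.succ b z}) ∧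
      C ⊆ {z : α | E i.castSucc p₀.2 z}} with hSy
  have hTfin : T.Finite := by
    apply Set.Finite.subset ((L.finite_toSet).image (fun p => {z | E i.succ p.1 z}))
    rintro C ⟨p, hp, _, rfl⟩
    exact ⟨p, hp, rfl⟩
  have hCxT : Cx ∉ T := by
    rintro ⟨p, hp, _, hCeq⟩
    have : E i.succ x p.1 := rel_of_class_eq hE hCeq
    exact notP p hp this
  have hsubx : insert Cx T ⊆ Sx := by
    rintro C hC
    rcases Set.mem_insert_iff.mp hC with rfl | ⟨p, hp, hrel, rfl⟩
    · exact ⟨⟨x, rfl⟩, fun z hz => hnested _ _ (Fin.castSucc_le_succ i) _ _ hz⟩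
    · refine ⟨⟨p.1, rfl⟩, fun z hz => ?_⟩
      exact (hE _).trans hrel (hnested _ _ (Fin.castSucc_le_succ i) _ _ hz)
  have hsuby : T' ⊆ Sy := by
    rintro C ⟨p, hp, hrel, rfl⟩
    refine ⟨⟨p.2, rfl⟩, fun z hz => ?_⟩
    have h1 : E i.castSucc p₀.1 p.1 := (hE _).trans ((hE _).symm hp₀) hrel
    have h2 : E i.castSucc p₀.2 p.2 := (hL p₀ hp₀L p hp _).mp h1
    exact (hE _).trans h2 (hnested _ _ (Fin.castSucc_le_succ i) _ _ hz)
  have hT'T : Cardinal.mk ↥T' ≤ Cardinal.mk ↥T := by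
    have hch : ∀ C : ↥T', ∃ p : α × α, p ∈ L ∧ E i.castSucc x p.1 ∧
        (C : Set α) = {z | E i.succ p.2 z} := by
      rintro ⟨C, p, hp, hrel, hCeq⟩
      exact ⟨p, hp, hrel, hCeq⟩
    choose g hg1 hg2 hg3 using hch
    refine ⟨⟨fun C => ⟨{z | E i.succ (g C).1 z}, (g C), hg1 C, hg2 C, rfl⟩, ?_⟩⟩
    intro C C' hCC'
    have h1 : E i.succ (g C).1 (g C').1 :=
      rel_of_class_eq hE (congrArg Subtype.val hCC')
    have h2 : E i.succ (g C).2 (g C').2 := (hL _ (hg1 C) _ (hg1 C') i.succ).mp h1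
    apply Subtype.ext
    rw [hg3 C, hg3 C', class_eq_of_rel hE h2]
  have hTk : Cardinal.mk ↥T + 1 ≤ k := by
    rw [← hk x]
    calc Cardinal.mk ↥T + 1 = Cardinal.mk ↥(insert Cx T) := (Cardinal.mk_insert hCxT).symm
      _ ≤ _ := Cardinal.mk_le_mk_of_subset hsubx
  have hex : ∃ D, D ∈ Sy ∧ D ∉ T' := by
    by_contra hcon
    push_neg at hcon
    have hSyT' : Sy ⊆ T' := hcon
    have h1 : k ≤ Cardinal.mk ↥T := by
      rw [← hk p₀.2]
      exact le_trans (Cardinal.mk_le_mk_of_subset hSyT') hT'T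
    have h2 : Cardinal.mk ↥T + 1 ≤ Cardinal.mk ↥T := le_trans hTk h1
    obtain ⟨m, hm⟩ := Cardinal.lt_aleph0.mp hTfin.lt_aleph0
    rw [hm] at h2
    have : m + 1 ≤ m := by exact_mod_cast h2
    omega
  obtain ⟨D, hDSy, hDT'⟩ := hex
  obtain ⟨⟨b, rfl⟩, hDsub⟩ := hDSy
  have hbp₀ : E i.castSucc p₀.2 b := hDsub ((hE _).refl b)
  -- b is not i.succ-related to any p.2
  have notP2 : ∀ p ∈ L, ¬ E i.succ b p.2 := by
    intro p hp hcon
    by_cases hrel : E i.castSucc x p.1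
    · apply hDT'
      refine ⟨p, hp, hrel, ?_⟩
      exact (class_eq_of_rel hE ((hE _).symm hcon)).symm
    · apply hrel
      have h1 : E i.castSucc b p.2 := hnested _ _ (Fin.castSucc_le_succ i) _ _ hcon
      have h2 : E i.castSucc p₀.2 p.2 := (hE _).trans hbp₀ h1
      have h3 : E i.castSucc p₀.1 p.1 := (hL p₀ hp₀L p hp _).mpr h2
      exact (hE _).trans hp₀ h3
  refine ⟨b, fun p hp j => ?_⟩
  rcases le_or_gt j i.castSucc with hj | hj
  · have hxp₀ : E j x p₀.1 := hnested j _ hj _ _ hp₀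
    have hbp₀' : E j b p₀.2 := hnested j _ hj _ _ ((hE _).symm hbp₀)
    constructor
    · intro h
      have h1 : E j p₀.1 p.1 := (hE j).trans ((hE j).symm hxp₀) h
      have h2 : E j p₀.2 p.2 := (hL p₀ hp₀L p hp j).mp h1
      exact (hE j).trans hbp₀' h2
    · intro h
      have h1 : E j p₀.2 p.2 := (hE j).trans ((hE j).symm hbp₀') h
      have h2 : E j p₀.1 p.1 := (hL p₀ hp₀L p hp j).mpr h1
      exact (hE j).trans hxp₀ h2
  · have hsucc : i.succ ≤ j := Fin.castSucc_lt_iff_succ_le.mp hj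
    constructor
    · intro h
      exact absurd (hnested _ _ hsucc _ _ h) (notP p hp)
    · intro h
      exact absurd (hnested _ _ hsucc _ _ h) (notP2 p hp)

include hE hzero hlast hnested H in
lemma extend_left (L : List (α × α)) (hL : GoodL E L) (x : α) :
    ∃ y, ∀ p ∈ L, ∀ i, E i y p.1 ↔ E i x p.2 := by
  have hLs : GoodL E (L.map Prod.swap) := by
    intro p hp q hq i
    simp only [List.mem_map] at hp hq
    obtain ⟨a, ha, rfl⟩ := hp
    obtain ⟨c, hc, rfl⟩ := hq
    exact (hL a ha c hc i).symm
  obtain ⟨y, hy⟩ := extend_right hE hzero hlast hnested H (L.map Prod.swap) hLs x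
  refine ⟨y, fun p hp i => ?_⟩
  have := hy p.swap (List.mem_map_of_mem (f := Prod.swap) hp) i
  exact this.symm

end Extend


lemma classes_card_eq (hE : ∀ i, Equivalence (E i)) (ψ : α ≃ α)
    (pres : ∀ i x y, E i x y ↔ E i (ψ x) (ψ y)) (i : Fin (n + 1)) (a : α) :
    Cardinal.mk ↥{C : Set α | (∃ b : α, C = {x : α | E i.succ b x}) ∧
          C ⊆ {x : α | E i.castSucc a x}} =
    Cardinal.mk ↥{C : Set α | (∃ b : α, C = {x : α | E i.succ b x}) ∧
          C ⊆ {x : α | E i.castSucc (ψ a) x}} := by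
  have presS : ∀ j (x y : α), E j x y ↔ E j (ψ.symm x) (ψ.symm y) := by
    intro j x y
    have h := pres j (ψ.symm x) (ψ.symm y)
    rw [ψ.apply_symm_apply, ψ.apply_symm_apply] at h
    exact h.symm
  have himg : ∀ (j : Fin (n + 2)) (b : α), ψ '' {z | E j b z} = {z | E j (ψ b) z} := by
    intro j b
    ext z
    constructor
    · rintro ⟨c, hc, rfl⟩
      exact (pres j b c).mp hc
    · intro hz
      refine ⟨ψ.symm z, ?_, ψ.apply_symm_apply z⟩
      have h := pres j b (ψ.symm z)
      rw [ψ.apply_symm_apply] at h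
      exact h.mpr hz
  have himgS : ∀ (j : Fin (n + 2)) (b : α), ψ.symm '' {z | E j b z} = {z | E j (ψ.symm b) z} := by
    intro j b
    ext z
    constructor
    · rintro ⟨c, hc, rfl⟩
      exact (presS j b c).mp hc
    · intro hz
      refine ⟨ψ z, ?_, ψ.symm_apply_apply z⟩
      have h := presS j b (ψ z)
      rw [ψ.symm_apply_apply] at h
      exact h.mpr hz
  apply Cardinal.mk_congr
  refine ⟨fun C => ⟨ψ '' (C : Set α), ?_, ?_⟩, fun C => ⟨ψ.symm '' (C : Set α), ?_, ?_⟩,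
    fun C => ?_, fun C => ?_⟩
  · obtain ⟨⟨b, hb⟩, _⟩ := C.2
    exact ⟨ψ b, by rw [hb, himg]⟩
  · obtain ⟨_, hsub⟩ := C.2
    rintro z ⟨c, hc, rfl⟩
    exact (pres i.castSucc a c).mp (hsub hc)
  · obtain ⟨⟨b, hb⟩, _⟩ := C.2
    exact ⟨ψ.symm b, by rw [hb, himgS]⟩
  · obtain ⟨_, hsub⟩ := C.2
    rintro z ⟨c, hc, rfl⟩
    have h := (presS i.castSucc (ψ a) c).mp (hsub hc)
    rwa [ψ.symm_apply_apply] at h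
  · exact Subtype.ext (ψ.symm_image_image (C : Set α))
  · exact Subtype.ext (ψ.image_symm_image (C : Set α))

end MultiUH

/-- A countable nested `n`-equivalence structure `(α, E₁, …, E_n)`, with `E 0` the total
relation and `E (n+1)` equality, is ultrahomogeneous iff for every `i ∈ {0, …, n}` there is a
cardinal `kᵢ` such that every `E i`-class is partitioned into exactly `kᵢ` many
`E (i+1)`-classes. -/
theorem multiUltrahomogeneous_iff_nested
    {α : Type u} [Countable α] (n : ℕ) (E : Fin (n + 2) → α → α → Prop)
    (hE : ∀ i, Equivalence (E i))
    (hzero : ∀ x y : α, E 0 x y)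
    (hlast : ∀ x y : α, E (Fin.last (n + 1)) x y ↔ x = y)
    (hnested : ∀ i j : Fin (n + 2), i ≤ j → ∀ x y : α, E j x y → E i x y) :
    MultiUltrahomogeneous E ↔
      ∀ i : Fin (n + 1), ∃ k : Cardinal.{u}, ∀ a : α,
        Cardinal.mk ↥{C : Set α | (∃ b : α, C = {x : α | E i.succ b x}) ∧
          C ⊆ {x : α | E i.castSucc a x}} = k := by
  constructor
  · -- forward direction
    intro hUH i
    rcases isEmpty_or_nonempty α with hα | hα
    · exact ⟨0, fun a => isEmptyElim a⟩
    obtain ⟨a₀⟩ := hα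
    refine ⟨Cardinal.mk ↥{C : Set α | (∃ b : α, C = {x : α | E i.succ b x}) ∧
          C ⊆ {x : α | E i.castSucc a₀ x}}, fun a => ?_⟩
    let φ : ↥({a₀} : Set α) ≃ ↥({a} : Set α) :=
      ⟨fun _ => ⟨a, rfl⟩, fun _ => ⟨a₀, rfl⟩,
        fun x => Subtype.ext (show a₀ = (x : α) from x.2.symm),
        fun x => Subtype.ext (show a = (x : α) from x.2.symm)⟩
    have hφ : ∀ (j : Fin (n + 2)) (x y : ↥({a₀} : Set α)),
        E j x y ↔ E j ((φ x : ↥({a} : Set α)) : α) ((φ y : ↥({a} : Set α)) : α) := by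
      intro j x y
      have hx : (x : α) = a₀ := x.2
      have hy : (y : α) = a₀ := y.2
      show E j (x : α) (y : α) ↔ E j a a
      rw [hx, hy]
      exact iff_of_true ((hE j).refl a₀) ((hE j).refl a)
    obtain ⟨ψ, pres, hext⟩ := hUH {a₀} {a} (Set.finite_singleton a₀)
      (Set.finite_singleton a) φ hφ
    have hψa₀ : ψ a₀ = a := hext ⟨a₀, rfl⟩
    rw [← hψa₀]
    exact (MultiUH.classes_card_eq hE ψ pres i a₀).symm
  · -- backward direction: back-and-forth
    intro H s t hs ht φ hφ
    classical
    rcases isEmpty_or_nonempty α with hα | hα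
    · exact ⟨Equiv.refl α, fun i x y => Iff.rfl, fun x => isEmptyElim (x : α)⟩
    obtain ⟨f, hf⟩ := exists_surjective_nat α
    haveI := hs.fintype
    set L₀ : List (α × α) := (Finset.univ : Finset ↥s).toList.map
        (fun x : ↥s => ((x : α), ((φ x : ↥t) : α))) with hL₀def
    have hL₀good : MultiUH.GoodL E L₀ := by
      intro p hp q hq i
      simp only [hL₀def, List.mem_map] at hp hq
      obtain ⟨x, _, rfl⟩ := hp
      obtain ⟨y, _, rfl⟩ := hq
      exact hφ i x y
    let step : ℕ → (Σ' l : List (α × α), MultiUH.GoodL E l) →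
        (Σ' l : List (α × α), MultiUH.GoodL E l) := fun k prev =>
      if hk : Even k then
        let h := MultiUH.extend_right hE hzero hlast hnested H prev.1 prev.2 (f (k / 2))
        ⟨(f (k / 2), Classical.choose h) :: prev.1,
          MultiUH.GoodL.cons hE prev.2 (Classical.choose_spec h)⟩
      else
        let h := MultiUH.extend_left hE hzero hlast hnested H prev.1 prev.2 (f (k / 2))
        ⟨(Classical.choose h, f (k / 2)) :: prev.1,
          MultiUH.GoodL.cons hE prev.2 (Classical.choose_spec h)⟩
    let Lc : ℕ → Σ' l : List (α × α), MultiUH.GoodL E l :=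
      fun k => Nat.rec (motive := fun _ => Σ' l : List (α × α), MultiUH.GoodL E l)
        ⟨L₀, hL₀good⟩ step k
    have hcons : ∀ k, ∃ q, (Lc (k + 1)).1 = q :: (Lc k).1 := by
      intro k
      show ∃ q, (step k (Lc k)).1 = q :: (Lc k).1
      unfold step
      beta_reduce
      split <;> exact ⟨_, rfl⟩
    have hmono : ∀ k k', k ≤ k' → ∀ p ∈ (Lc k).1, p ∈ (Lc k').1 := by
      intro k k' hkk'
      induction k', hkk' using Nat.le_induction with
      | base => exact fun p hp => hp
      | succ m hm ih =>
        intro p hp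
        obtain ⟨q, hq⟩ := hcons m
        rw [hq]
        exact List.mem_cons_of_mem q (ih p hp)
    set G : Set (α × α) := {p | ∃ k, p ∈ (Lc k).1} with hG
    have hGood : ∀ p ∈ G, ∀ q ∈ G, ∀ i, E i p.1 q.1 ↔ E i p.2 q.2 := by
      rintro p ⟨k₁, hp⟩ q ⟨k₂, hq⟩ i
      exact (Lc (max k₁ k₂)).2 p (hmono _ _ (le_max_left _ _) p hp)
        q (hmono _ _ (le_max_right _ _) q hq) i
    have hfun : ∀ {x y y' : α}, (x, y) ∈ G → (x, y') ∈ G → y = y' := by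
      intro x y y' h1 h2
      have h := hGood _ h1 _ h2 (Fin.last (n + 1))
      exact (hlast y y').mp (h.mp ((hlast x x).mpr rfl))
    have hinj : ∀ {x x' y : α}, (x, y) ∈ G → (x', y) ∈ G → x = x' := by
      intro x x' y h1 h2
      have h := hGood _ h1 _ h2 (Fin.last (n + 1))
      exact (hlast x x').mp (h.mpr ((hlast y y).mpr rfl))
    have htotal : ∀ x : α, ∃ y, (x, y) ∈ G := by
      intro x
      obtain ⟨m, rfl⟩ := hf x
      have heven : Even (2 * m) := even_two_mul m
      have hdiv : (2 * m) / 2 = m := by omega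
      have hstep : ∃ y, (f m, y) ∈ (Lc (2 * m + 1)).1 := by
        show ∃ y, (f m, y) ∈ (step (2 * m) (Lc (2 * m))).1
        unfold step
        beta_reduce
        rw [dif_pos heven, hdiv]
        exact ⟨_, List.mem_cons_self⟩
      obtain ⟨y, hy⟩ := hstep
      exact ⟨y, 2 * m + 1, hy⟩
    have hsurj : ∀ y : α, ∃ x, (x, y) ∈ G := by
      intro y
      obtain ⟨m, rfl⟩ := hf y
      have hodd : ¬ Even (2 * m + 1) := by
        simp [Nat.even_add_one, even_two_mul m]
      have hdiv : (2 * m + 1) / 2 = m := by omega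
      have hstep : ∃ x, (x, f m) ∈ (Lc (2 * m + 2)).1 := by
        show ∃ x, (x, f m) ∈ (step (2 * m + 1) (Lc (2 * m + 1))).1
        unfold step
        beta_reduce
        rw [dif_neg hodd, hdiv]
        exact ⟨_, List.mem_cons_self⟩
      obtain ⟨x, hx⟩ := hstep
      exact ⟨x, 2 * m + 2, hx⟩
    choose F hF using htotal
    have Fbij : Function.Bijective F := by
      constructor
      · intro a b hab
        exact hinj (hF a) (hab ▸ hF b)
      · intro y
        obtain ⟨x, hx⟩ := hsurj y
        exact ⟨x, hfun (hF x) hx⟩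
    refine ⟨Equiv.ofBijective F Fbij, fun i a b => hGood _ (hF a) _ (hF b) i, fun x => ?_⟩
    have hx0 : ((x : α), ((φ x : ↥t) : α)) ∈ G := by
      refine ⟨0, ?_⟩
      show ((x : α), ((φ x : ↥t) : α)) ∈ L₀
      simp only [hL₀def, List.mem_map]
      exact ⟨x, by simp, rfl⟩
    exact hfun (hF (x : α)) hx0
end

section
/- Let (α, E₁, …, E_n) be a countable nested n-equivalence structure in which every Eᵢ-class (1 ≤ i ≤ n) is finite. Then (α, E₁, …, E_n) is ultrahomogeneous if and only if for each i with 1 ≤ i ≤ n, the single equivalence structure (α, Eᵢ) is ultrahomogeneous. -/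
/-- The single equivalence structure `(α, E)` is ultrahomogeneous: every `E`-preserving
bijection between finite subsets of `α` extends to a bijection of `α` preserving `E` in both
directions. -/
def SingleUltrahomogeneous {α : Type*} (E : α → α → Prop) : Prop :=
  ∀ s t : Set α, s.Finite → t.Finite →
    ∀ φ : ↥s ≃ ↥t,
      (∀ x y : ↥s, E x y ↔ E ((φ x : ↥t) : α) ((φ y : ↥t) : α)) →
      ∃ ψ : α ≃ α, (∀ x y : α, E x y ↔ E (ψ x) (ψ y)) ∧
        ∀ x : ↥s, ψ (x : α) = ((φ x : ↥t) : α)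


universe u

lemma extendPartialEquiv {γ : Type*} {δ : Type*} (h0 : Nonempty (γ ≃ δ)) {s : Set γ}
    (hs : s.Finite) (f : s ↪ δ) : ∃ g : γ ≃ δ, ∀ x : s, g x = f x := by
  cases finite_or_infinite γ with
  | inl h => exact Cardinal.extend_function_finite f h0
  | inr h =>
    refine Cardinal.extend_function_of_lt f ?_ h0
    have : Finite ↥s := hs.to_subtype
    exact (Cardinal.lt_aleph0_of_finite ↥s).trans_le (Cardinal.aleph0_le_mk γ)

theorem keyLemma (m : ℕ) : ∀ {α : Type u} [Countable α] (E : Fin m → α → α → Prop),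
    (∀ i, Equivalence (E i)) →
    (∀ i j : Fin m, i ≤ j → ∀ x y : α, E j x y → E i x y) →
    (∀ (i : Fin m) (a : α), {x : α | E i a x}.Finite) →
    (∀ (i : Fin m) (a b : α), Nat.card {x : α | E i a x} = Nat.card {x : α | E i b x}) →
    MultiUltrahomogeneous E := by
  induction m with
  | zero =>
    intro α _inst E _ _ _ _ s t hs ht φ hφ
    obtain ⟨ψ, hψ⟩ := extendPartialEquiv ⟨Equiv.refl α⟩ hs
      (φ.toEmbedding.trans (Function.Embedding.subtype _))
    exact ⟨ψ, fun i => i.elim0, hψ⟩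
  | succ m ih =>
    intro α _inst E hE hnested hfin hconst s t hs ht φ hφ
    classical
    set L : Fin (m + 1) := Fin.last m with hLdef
    let r : Setoid α := ⟨E L, hE L⟩
    let β := Quotient r
    haveI : Countable β := inferInstanceAs (Countable (Quotient r))
    let q : α → β := Quotient.mk r
    have hq : ∀ x y : α, q x = q y ↔ E L x y :=
      fun x y => ⟨fun h => Quotient.exact h, fun h => Quotient.sound h⟩
    have hEL_to : ∀ (i : Fin m) {x y : α}, E L x y → E i.castSucc x y :=
      fun i {x y} hxy => hnested _ _ (Fin.le_last _) _ _ hxy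
    let E' : Fin m → β → β → Prop := fun i =>
      Quotient.lift₂ (E i.castSucc) (fun a b a' b' ha hb => propext
        ⟨fun h => (hE _).trans ((hE _).trans ((hE _).symm (hEL_to i ha)) h) (hEL_to i hb),
         fun h => (hE _).trans ((hE _).trans (hEL_to i ha) h) ((hE _).symm (hEL_to i hb))⟩)
    have E'mk : ∀ (i : Fin m) (x y : α), E' i (q x) (q y) ↔ E i.castSucc x y :=
      fun i x y => Iff.rfl
    have hE' : ∀ i, Equivalence (E' i) := by
      intro i
      have hr : ∀ b, E' i b b := fun b => Quotient.inductionOn b (fun a => (hE _).refl a)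
      have hsy : ∀ b c, E' i b c → E' i c b :=
        fun b c => Quotient.inductionOn₂ b c (fun a a' h => (hE _).symm h)
      have htr : ∀ b c d, E' i b c → E' i c d → E' i b d :=
        fun b c d => Quotient.inductionOn₃ b c d (fun a a' a'' h h' => (hE _).trans h h')
      exact ⟨hr, fun {b c} => hsy b c, fun {b c d} => htr b c d⟩
    have hnested' : ∀ i j : Fin m, i ≤ j → ∀ x y : β, E' j x y → E' i x y := by
      intro i j hij x y
      refine Quotient.inductionOn₂ x y (fun a b h => ?_)
      exact hnested _ _ (by simpa using hij) a b h
    have hfin' : ∀ (i : Fin m) (b : β), {y : β | E' i b y}.Finite := by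
      intro i b
      induction b using Quotient.inductionOn with
      | h a =>
        have hsub : {y : β | E' i (q a) y} ⊆ q '' {x | E i.castSucc a x} := by
          intro y hy
          induction y using Quotient.inductionOn with
          | h c => exact ⟨c, hy, rfl⟩
        exact ((hfin _ a).image q).subset hsub
    have hcount : ∀ (i : Fin m) (a : α),
        Nat.card {x : α | E i.castSucc a x}
          = Nat.card {y : β | E' i (q a) y} * Nat.card {x : α | E L a x} := by
      intro i a
      haveI : Finite {x : α | E i.castSucc a x} := (hfin _ a).to_subtype
      haveI : Finite {x : α | E L a x} := (hfin _ a).to_subtype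
      haveI : Finite {y : β | E' i (q a) y} := (hfin' i (q a)).to_subtype
      let f : {x : α | E i.castSucc a x} → {y : β | E' i (q a) y} :=
        fun x => ⟨q x, x.2⟩
      have fibEq : ∀ y : {y : β | E' i (q a) y},
          Nat.card {x // f x = y} = Nat.card {x : α | E L a x} := by
        intro y
        have hrep : q ((y : β).out) = (y : β) := Quotient.out_eq _
        have e1 : {x // f x = y} ≃ {z : α | E L (y : β).out z} :=
          { toFun := fun x => ⟨x.1.1, (hq _ _).mp (hrep.trans (congrArg Subtype.val x.2).symm)⟩
            invFun := fun z => by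
              refine ⟨⟨z.1, ?_⟩, ?_⟩
              · have hqz : q z.1 = (y : β) := ((hq _ _).mpr z.2).symm.trans hrep
                have hyc : E i.castSucc a (y : β).out := by
                  have := y.2
                  rw [← hrep] at this
                  exact this
                exact (hE _).trans hyc (hEL_to i z.2)
              · exact Subtype.ext (((hq _ _).mpr z.2).symm.trans hrep)
            left_inv := fun x => Subtype.ext (Subtype.ext rfl)
            right_inv := fun z => Subtype.ext rfl }
        rw [Nat.card_congr e1]
        exact hconst L _ a
      have hne : ∀ y : {y : β | E' i (q a) y},
          Nonempty ({x // f x = y} ≃ {x : α | E L a x}) := by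
        intro y
        haveI : Finite {x // f x = y} := Subtype.finite
        haveI : Finite ↥{x : α | E L a x} := (hfin _ a).to_subtype
        exact Finite.card_eq.mp (fibEq y)
      let e := fun y => (hne y).some
      calc Nat.card {x : α | E i.castSucc a x}
          = Nat.card (Σ y : {y : β | E' i (q a) y}, {x // f x = y}) :=
            (Nat.card_congr (Equiv.sigmaFiberEquiv f)).symm
        _ = Nat.card ({y : β | E' i (q a) y} × {x : α | E L a x}) :=
            Nat.card_congr ((Equiv.sigmaCongrRight e).trans (Equiv.sigmaEquivProd _ _))
        _ = _ := Nat.card_prod _ _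
    have hconst' : ∀ (i : Fin m) (b c : β),
        Nat.card {y : β | E' i b y} = Nat.card {y : β | E' i c y} := by
      intro i b c
      induction b using Quotient.inductionOn with
      | h a =>
      induction c using Quotient.inductionOn with
      | h a' =>
        have hK : 0 < Nat.card {x : α | E L a' x} := by
          haveI : Finite {x : α | E L a' x} := (hfin _ _).to_subtype
          haveI : Nonempty {x : α | E L a' x} := ⟨⟨a', (hE L).refl a'⟩⟩
          exact Nat.card_pos
        apply Nat.eq_of_mul_eq_mul_right hK
        have h1 := hcount i a
        have h2 := hcount i a'
        rw [hconst L a a'] at h1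
        rw [← h1, ← h2]
        exact hconst i.castSucc a a'
    -- the quotient partial isomorphism
    let sb : Set β := q '' s
    let tb : Set β := q '' t
    have hsb : sb.Finite := hs.image q
    have htb : tb.Finite := ht.image q
    have keyF : ∀ (x y : ↥s), q (x : α) = q (y : α) → q ((φ x : ↥t) : α) = q ((φ y : ↥t) : α) :=
      fun x y hxy => (hq _ _).mpr ((hφ L x y).mp ((hq _ _).mp hxy))
    have keyG : ∀ (x y : ↥t), q (x : α) = q (y : α) →
        q ((φ.symm x : ↥s) : α) = q ((φ.symm y : ↥s) : α) := by
      intro x y hxy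
      apply (hq _ _).mpr
      have := (hφ L (φ.symm x) (φ.symm y)).mpr
      simp only [Equiv.apply_symm_apply] at this
      exact this ((hq _ _).mp hxy)
    let F : ↥sb → ↥tb := fun p =>
      ⟨q ((φ ⟨p.2.choose, p.2.choose_spec.1⟩ : ↥t) : α),
        Set.mem_image_of_mem q (Subtype.coe_prop _)⟩
    have Fspec : ∀ (p : ↥sb) (x : ↥s), q (x : α) = (p : β) → (F p : β) = q ((φ x : ↥t) : α) :=
      fun p x hx => keyF ⟨p.2.choose, p.2.choose_spec.1⟩ x (p.2.choose_spec.2.trans hx.symm)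
    let G : ↥tb → ↥sb := fun p =>
      ⟨q ((φ.symm ⟨p.2.choose, p.2.choose_spec.1⟩ : ↥s) : α),
        Set.mem_image_of_mem q (Subtype.coe_prop _)⟩
    have Gspec : ∀ (p : ↥tb) (y : ↥t), q (y : α) = (p : β) →
        (G p : β) = q ((φ.symm y : ↥s) : α) :=
      fun p y hy => keyG ⟨p.2.choose, p.2.choose_spec.1⟩ y (p.2.choose_spec.2.trans hy.symm)
    have GF : ∀ p, G (F p) = p := by
      intro p
      obtain ⟨x, hx, hqx⟩ := p.2
      have h1 : (F p : β) = q ((φ ⟨x, hx⟩ : ↥t) : α) := Fspec p ⟨x, hx⟩ hqx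
      have h2 := Gspec (F p) (φ ⟨x, hx⟩) h1.symm
      apply Subtype.ext
      rw [h2, Equiv.symm_apply_apply, hqx]
    have FG : ∀ p, F (G p) = p := by
      intro p
      obtain ⟨y, hy, hqy⟩ := p.2
      have h1 : (G p : β) = q ((φ.symm ⟨y, hy⟩ : ↥s) : α) := Gspec p ⟨y, hy⟩ hqy
      have h2 := Fspec (G p) (φ.symm ⟨y, hy⟩) h1.symm
      apply Subtype.ext
      rw [h2, Equiv.apply_symm_apply, hqy]
    let φb : ↥sb ≃ ↥tb := ⟨F, G, GF, FG⟩
    have hφb : ∀ (i : Fin m) (p p' : ↥sb),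
        E' i (p : β) (p' : β) ↔ E' i ((φb p : ↥tb) : β) ((φb p' : ↥tb) : β) := by
      intro i p p'
      obtain ⟨x, hx, hqx⟩ := p.2
      obtain ⟨x', hx', hqx'⟩ := p'.2
      have h1 : ((φb p : ↥tb) : β) = q ((φ ⟨x, hx⟩ : ↥t) : α) := Fspec p ⟨x, hx⟩ hqx
      have h1' : ((φb p' : ↥tb) : β) = q ((φ ⟨x', hx'⟩ : ↥t) : α) := Fspec p' ⟨x', hx'⟩ hqx'
      rw [← hqx, ← hqx', h1, h1']
      exact hφ i.castSucc ⟨x, hx⟩ ⟨x', hx'⟩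
    obtain ⟨ψb, hψb, hψbext⟩ := ih E' hE' hnested' hfin' hconst' sb tb hsb htb φb hφb
    -- classes
    have hCeq : ∀ b : β, {x : α | q x = b} = {x : α | E L b.out x} := by
      intro b
      ext x
      constructor
      · intro hx
        exact (hq _ _).mp ((Quotient.out_eq b).trans hx.symm)
      · intro hx
        exact ((hq _ _).mpr hx).symm.trans (Quotient.out_eq b)
    have hCfin : ∀ b : β, {x : α | q x = b}.Finite := by
      intro b
      rw [hCeq b]
      exact hfin L b.out
    have hθ : ∀ b : β, ∃ θ : ↥{x : α | q x = b} ≃ ↥{x : α | q x = ψb b},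
        ∀ (x : ↥{x : α | q x = b}) (hx : (x : α) ∈ s),
          ((θ x : ↥{x : α | q x = ψb b}) : α) = ((φ ⟨(x : α), hx⟩ : ↥t) : α) := by
      intro b
      haveI : Finite ↥{x : α | q x = b} := (hCfin b).to_subtype
      haveI : Finite ↥{x : α | q x = ψb b} := (hCfin _).to_subtype
      have hne : Nonempty (↥{x : α | q x = b} ≃ ↥{x : α | q x = ψb b}) := by
        apply Finite.card_eq.mp
        rw [hCeq b, hCeq (ψb b)]
        exact hconst L _ _
      let sB : Set ↥{x : α | q x = b} := {x | (x : α) ∈ s}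
      have hsB : sB.Finite := Set.toFinite _
      have himg : ∀ x : ↥sB, q ((φ ⟨((x : ↥{x : α | q x = b}) : α), x.2⟩ : ↥t) : α) = ψb b := by
        intro x
        have h0 : q (((x : ↥{x : α | q x = b}) : α)) = b := (x : ↥{x : α | q x = b}).2
        have h1 := hψbext ⟨q (((x : ↥{x : α | q x = b}) : α)), Set.mem_image_of_mem q x.2⟩
        have h2 : ((φb ⟨q (((x : ↥{x : α | q x = b}) : α)), Set.mem_image_of_mem q x.2⟩ : ↥tb) : β)
            = q ((φ ⟨_, x.2⟩ : ↥t) : α) :=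
          Fspec _ ⟨_, x.2⟩ rfl
        exact h2.symm.trans (h1.symm.trans (congrArg ψb h0))
      have finj : Function.Injective
          (fun x : ↥sB => (⟨((φ ⟨_, x.2⟩ : ↥t) : α), himg x⟩ : ↥{x : α | q x = ψb b})) := by
        intro x y h
        have h1 : ((φ ⟨((x : ↥{x : α | q x = b}) : α), x.2⟩ : ↥t) : α)
            = ((φ ⟨((y : ↥{x : α | q x = b}) : α), y.2⟩ : ↥t) : α) :=
          congrArg (fun z : ↥{x : α | q x = ψb b} => (z : α)) h
        have h2 := φ.injective (Subtype.ext h1)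
        have h3 : ((x : ↥{x : α | q x = b}) : α) = ((y : ↥{x : α | q x = b}) : α) :=
          congrArg (fun z : ↥s => (z : α)) h2
        exact Subtype.ext (Subtype.ext h3)
      obtain ⟨θ, hθ0⟩ := extendPartialEquiv hne hsB ⟨_, finj⟩
      refine ⟨θ, fun x hx => ?_⟩
      exact congrArg Subtype.val (hθ0 ⟨x, hx⟩)
    choose θ hθspec using hθ
    let Ψ : α → α := fun x => ((θ (q x) ⟨x, rfl⟩ : ↥{y : α | q y = ψb (q x)}) : α)
    have hΨeq : ∀ (b : β) (x : α) (h : q x = b),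
        Ψ x = ((θ b ⟨x, h⟩ : ↥{y : α | q y = ψb b}) : α) := by
      intro b x h
      subst h
      rfl
    have hΨclass : ∀ x : α, q (Ψ x) = ψb (q x) := fun x => (θ (q x) ⟨x, rfl⟩).2
    have hinj : Function.Injective Ψ := by
      intro x y hxy
      have hcls : ψb (q x) = ψb (q y) := by
        rw [← hΨclass x, ← hΨclass y, hxy]
      have hb : q x = q y := ψb.injective hcls
      have hx := hΨeq (q y) x hb
      have hy := hΨeq (q y) y rfl
      rw [hx, hy] at hxy
      have := (θ (q y)).injective (Subtype.ext hxy)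
      exact congrArg Subtype.val this
    have hsurj : Function.Surjective Ψ := by
      intro z
      have hz : q z = ψb (ψb.symm (q z)) := (ψb.apply_symm_apply _).symm
      set b := ψb.symm (q z) with hbdef
      let w : ↥{x : α | q x = b} := (θ b).symm ⟨z, hz⟩
      refine ⟨(w : α), ?_⟩
      have h1 := hΨeq b (w : α) w.2
      rw [h1]
      have h2 : θ b ⟨(w : α), w.2⟩ = ⟨z, hz⟩ := by
        have : (⟨(w : α), w.2⟩ : ↥{x : α | q x = b}) = w := rfl
        rw [this]
        exact (θ b).apply_symm_apply _
      rw [h2]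
    let ψ : α ≃ α := Equiv.ofBijective Ψ ⟨hinj, hsurj⟩
    have hψap : ∀ x : α, ψ x = Ψ x := fun x => rfl
    refine ⟨ψ, ?_, ?_⟩
    · intro i x y
      rw [hψap, hψap]
      refine Fin.lastCases ?_ ?_ i
      · constructor
        · intro h
          apply (hq _ _).mp
          rw [hΨclass x, hΨclass y]
          exact congrArg ψb ((hq _ _).mpr h)
        · intro h
          apply (hq _ _).mp
          apply ψb.injective
          rw [← hΨclass x, ← hΨclass y]
          exact (hq _ _).mpr h
      · intro j
        have step : E' j (q x) (q y) ↔ E' j (q (Ψ x)) (q (Ψ y)) := by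
          rw [hΨclass x, hΨclass y]
          exact hψb j (q x) (q y)
        exact step
    · intro x
      rw [hψap]
      have h1 := hΨeq (q (x : α)) (x : α) rfl
      rw [h1]
      have h2 := hθspec (q (x : α)) ⟨(x : α), rfl⟩ x.2
      rw [h2]

noncomputable def singletonEquiv {α : Type*} (a b : α) : ↥({a} : Set α) ≃ ↥({b} : Set α) :=
  ⟨fun _ => ⟨b, rfl⟩, fun _ => ⟨a, rfl⟩,
    fun x => Subtype.ext (x.2 : (x : α) = a).symm,
    fun y => Subtype.ext (y.2 : (y : α) = b).symm⟩

lemma card_class_eq_of_auto {α : Type*} {F : α → α → Prop}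
    {a b : α} (ψ : α ≃ α) (hpres : ∀ x y : α, F x y ↔ F (ψ x) (ψ y)) (hab : ψ a = b) :
    Nat.card {x : α | F a x} = Nat.card {x : α | F b x} :=
  Nat.card_congr (Equiv.subtypeEquiv ψ (fun x =>
    (hpres a x).trans (iff_of_eq (congrArg (fun z => F z (ψ x)) hab))))

/-- A countable nested `n`-equivalence structure in which every class is finite is
ultrahomogeneous iff each single equivalence structure `(α, Eᵢ)` is ultrahomogeneous. -/
theorem multiUltrahomogeneous_iff_forall_single
    {α : Type*} [Countable α] (n : ℕ) (E : Fin n → α → α → Prop)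
    (hE : ∀ i, Equivalence (E i))
    (hnested : ∀ i j : Fin n, i ≤ j → ∀ x y : α, E j x y → E i x y)
    (hfin : ∀ (i : Fin n) (a : α), {x : α | E i a x}.Finite) :
    MultiUltrahomogeneous E ↔ ∀ i : Fin n, SingleUltrahomogeneous (E i) := by
  constructor
  · intro hM i
    intro s t hs ht φ hφ1
    have hconst1 : ∀ (a b : α),
        Nat.card {x : α | E i a x} = Nat.card {x : α | E i b x} := by
      intro a b
      obtain ⟨ψ, hpres, hext⟩ := hM {a} {b} (Set.finite_singleton a) (Set.finite_singleton b)
        (singletonEquiv a b) (fun j x y => by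
          rw [show (x : α) = a from x.2, show (y : α) = a from y.2]
          exact iff_of_true ((hE j).refl a) ((hE j).refl b))
      exact card_class_eq_of_auto ψ (hpres i) (hext ⟨a, rfl⟩)
    have hMi := keyLemma 1 (fun _ : Fin 1 => E i)
      (fun _ => hE i) (fun _ _ _ x y h => h) (fun _ a => hfin i a) (fun _ a b => hconst1 a b)
    obtain ⟨ψ, hpres, hext⟩ := hMi s t hs ht φ (fun _ x y => hφ1 x y)
    exact ⟨ψ, hpres 0, hext⟩
  · intro hS
    apply keyLemma n E hE hnested hfin
    intro i a b
    obtain ⟨ψ, hpres, hext⟩ := hS i {a} {b} (Set.finite_singleton a) (Set.finite_singleton b)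
      (singletonEquiv a b) (fun x y => by
        rw [show (x : α) = a from x.2, show (y : α) = a from y.2]
        exact iff_of_true ((hE i).refl a) ((hE i).refl b))
    exact card_class_eq_of_auto ψ hpres (hext ⟨a, rfl⟩)
end
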